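/- arXiv:2502.15181 — 4 statements merged into one kernel-verified Lean document; each statement's English description precedes it below -/
import Mathlib

section
/- Let q be a natural join query with connected join graph G_q, edges weighted by w(R,S) = |attr(R) ∩ attr(S)|. For a spanning tree T of G_q and an attribute A, let e_A(T) be the number of edges {R,S} of T with A ∈ attr(R) ∩ attr(S), and let n_A be the number of relations of q whose attribute set contains A. Then the total weight of T equals the sum over all attributes A of e_A(T), this sum is at most the sum over all attributes A of (n_A − 1), and equality holds if and only if T is a join tree of q. -/
/-!
Each edge `{R, S}` of `T` contributes to `e_A(T)` once for every shared attribute `A`, so the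
weight of `T` is `∑ A, e_A(T)` by double counting. The edges counted by `e_A(T)` are those of the
subgraph of `T` induced on the `n_A` relations containing `A`. Being a subgraph of a tree, it is a
forest, so it has at most `n_A - 1` edges, with equality exactly when it is connected.
-/

namespace JoinQuery

universe u

variable {ι : Type} {α : Type}

/-- A *tuple* over a finite set `X` of attributes, with values in the domain `D`:
a function assigning a domain value to each attribute of `X`. -/
def Tuple (D : Type u) {α : Type} (X : Finset α) : Type u := {a // a ∈ X} → D

/-- Projection: the restriction of a tuple over `X` to a subset `Y ⊆ X` of the attributes. -/
def restrict {D : Type u} {X Y : Finset α} (h : Y ⊆ X) (t : Tuple D X) : Tuple D Y :=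
  fun a => t ⟨a.1, h a.2⟩

/-- A database instance for the natural join query whose relation symbols are the elements
of `ι` with attribute sets given by `attr`: a finite set of tuples for every relation. -/
structure Inst (attr : ι → Finset α) (D : Type u) where
  rel : ∀ R : ι, Set (Tuple D (attr R))
  finite : ∀ R : ι, (rel R).Finite

/-- The set of attributes of the (sub)query given by the set `S` of relations. -/
def attrsOf [DecidableEq α] (attr : ι → Finset α) (S : Finset ι) : Finset α :=
  S.biUnion attr

theorem attr_subset_attrsOf [DecidableEq α] (attr : ι → Finset α) {S : Finset ι} {R : ι}
    (hR : R ∈ S) : attr R ⊆ attrsOf attr S :=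
  Finset.subset_biUnion_of_mem attr hR

theorem attrsOf_mono [DecidableEq α] (attr : ι → Finset α) {S₁ S₂ : Finset ι} (h : S₁ ⊆ S₂) :
    attrsOf attr S₁ ⊆ attrsOf attr S₂ :=
  Finset.biUnion_subset_biUnion_of_subset_left attr h

/-- The output of the natural join of the relations in `S`, on the instance `I`:
all tuples over the attributes of `S` whose restriction to each relation `R ∈ S`
belongs to `I.rel R`. -/
def output [DecidableEq α] {D : Type u} (attr : ι → Finset α) (I : Inst attr D)
    (S : Finset ι) : Set (Tuple D (attrsOf attr S)) :=
  {t | ∀ (R : ι) (hR : R ∈ S), restrict (attr_subset_attrsOf attr hR) t ∈ I.rel R}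

/-- The output `q(I)` of the full query (the natural join of all relations). -/
def fullOutput [Fintype ι] [DecidableEq α] {D : Type u} (attr : ι → Finset α)
    (I : Inst attr D) : Set (Tuple D (attrsOf attr Finset.univ)) :=
  output attr I Finset.univ

/-- An instance is *fully reduced* if every relation equals the projection of the
full output onto its attributes. -/
def FullyReduced [Fintype ι] [DecidableEq α] {D : Type u} (attr : ι → Finset α)
    (I : Inst attr D) : Prop :=
  ∀ R : ι,
    I.rel R = restrict (attr_subset_attrsOf attr (Finset.mem_univ R)) '' fullOutput attr I

/-- The subjoin given by the set `S` of relations is *safe*: on every fully reduced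
instance, its output is the projection of the full output onto its attributes. -/
def Safe [Fintype ι] [DecidableEq α] (attr : ι → Finset α) (S : Finset ι) : Prop :=
  ∀ (D : Type u) (I : Inst attr D), FullyReduced attr I →
    output attr I S =
      restrict (attrsOf_mono attr (Finset.subset_univ S)) '' fullOutput attr I

/-- The *join graph* of the query: vertices are the relations, two distinct relations
being adjacent iff they share an attribute. -/
def joinGraph [DecidableEq α] (attr : ι → Finset α) : SimpleGraph ι where
  Adj R S := R ≠ S ∧ (attr R ∩ attr S).Nonempty
  symm := by
    constructor
    intro R S h
    exact ⟨h.1.symm, by rw [Finset.inter_comm]; exact h.2⟩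
  loopless := by constructor; intro R h; exact h.1 rfl

/-- `T` is a spanning tree of the graph `G` (a tree on the same vertex set all of whose
edges are edges of `G`). -/
def IsSpanningTree (G T : SimpleGraph ι) : Prop :=
  T ≤ G ∧ T.IsTree

/-- `T` is a *join tree* of the query: a spanning tree of the join graph such that, for
every attribute `A` (occurring in the query), the relations containing `A` induce a
connected subgraph of `T`. -/
def IsJoinTree [DecidableEq α] (attr : ι → Finset α) (T : SimpleGraph ι) : Prop :=
  IsSpanningTree (joinGraph attr) T ∧
    ∀ A : α, (∃ R : ι, A ∈ attr R) → (T.induce {R : ι | A ∈ attr R}).Connected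

/-- The query is (α-)acyclic iff it has a join tree. -/
def Acyclic [DecidableEq α] (attr : ι → Finset α) : Prop :=
  ∃ T : SimpleGraph ι, IsJoinTree attr T

/-- The weight of an edge `{R, S}`: the number of shared attributes `|attr R ∩ attr S|`. -/
def edgeWeight [DecidableEq α] (attr : ι → Finset α) : Sym2 ι → ℕ :=
  Sym2.lift ⟨fun R S => (attr R ∩ attr S).card, fun R S => by simp [Finset.inter_comm]⟩

/-- The total weight of (the edges of) a graph `T`. -/
noncomputable def weight [DecidableEq α] (attr : ι → Finset α) (T : SimpleGraph ι) : ℕ :=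
  ∑ᶠ e ∈ T.edgeSet, edgeWeight attr e

/-- `T` is a maximum spanning tree of the weighted join graph. -/
def IsMaxSpanningTree [DecidableEq α] (attr : ι → Finset α) (T : SimpleGraph ι) : Prop :=
  IsSpanningTree (joinGraph attr) T ∧
    ∀ T' : SimpleGraph ι, IsSpanningTree (joinGraph attr) T' →
      weight attr T' ≤ weight attr T

/-- γ-acyclicity: α-acyclicity together with the absence of a γ-cycle of size 3,
i.e. of three distinct relations `R, S, T` and three distinct attributes `x, y, z`
with `x, y ∈ attr R`, `y, z ∈ attr S` and `x, y, z ∈ attr T`. -/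
def GammaAcyclic [DecidableEq α] (attr : ι → Finset α) : Prop :=
  Acyclic attr ∧
    ¬ ∃ (R S T : ι) (x y z : α),
        R ≠ S ∧ R ≠ T ∧ S ≠ T ∧ x ≠ y ∧ x ≠ z ∧ y ≠ z ∧
        x ∈ attr R ∧ y ∈ attr R ∧ y ∈ attr S ∧ z ∈ attr S ∧
        x ∈ attr T ∧ y ∈ attr T ∧ z ∈ attr T

/-- A *connected subjoin*: a nonempty set of relations inducing a connected subgraph
of the join graph. -/
def ConnectedSubjoin [DecidableEq α] (attr : ι → Finset α) (S : Finset ι) : Prop :=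
  S.Nonempty ∧ ((joinGraph attr).induce (S : Set ι)).Connected

/-- The number of edges of `T` whose both endpoints contain the attribute `A`. -/
noncomputable def eCount (attr : ι → Finset α) (T : SimpleGraph ι) (A : α) : ℕ :=
  {e ∈ T.edgeSet | ∀ R ∈ e, A ∈ attr R}.ncard

/-- The number of relations whose attribute set contains `A`. -/
noncomputable def nCount (attr : ι → Finset α) (A : α) : ℕ :=
  {R : ι | A ∈ attr R}.ncard

/-- A (binary) join expression over the relation symbols `ι`. -/
inductive JoinExpr (ι : Type) : Type where
  | leaf : ι → JoinExpr ι
  | node : JoinExpr ι → JoinExpr ι → JoinExpr ι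

namespace JoinExpr

/-- The list of leaves of a join expression. -/
def leaves {ι : Type} : JoinExpr ι → List ι
  | leaf R => [R]
  | node l r => l.leaves ++ r.leaves

/-- The set of relations appearing in a join expression. -/
def rels {ι : Type} [DecidableEq ι] : JoinExpr ι → Finset ι
  | leaf R => {R}
  | node l r => l.rels ∪ r.rels

/-- The leaves of the expression are exactly the relations of the query,
each occurring once. -/
def Complete {ι : Type} (θ : JoinExpr ι) : Prop :=
  θ.leaves.Nodup ∧ ∀ R : ι, R ∈ θ.leaves

/-- The expression has no Cartesian products: at every internal node, the relations of the
two subtrees are joined by at least one edge of `G`. -/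
def ConnectedExpr {ι : Type} [DecidableEq ι] (G : SimpleGraph ι) : JoinExpr ι → Prop
  | leaf _ => True
  | node l r =>
      (∃ R ∈ l.rels, ∃ S ∈ r.rels, G.Adj R S) ∧ ConnectedExpr G l ∧ ConnectedExpr G r

/-- The expression is *monotone* on the instance `I`: at every internal node
`θ' = θ'₁ ⋈ θ'₂`, the output of each child equals the projection of the output of the
node onto the child's attributes (no tuple of either input is removed by the join). -/
def MonotoneOn {ι α : Type} [DecidableEq ι] [DecidableEq α] {D : Type u}
    (attr : ι → Finset α) (I : Inst attr D) : JoinExpr ι → Prop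
  | leaf _ => True
  | node l r =>
      output attr I l.rels =
        restrict (attrsOf_mono attr Finset.subset_union_left) ''
          output attr I (l.rels ∪ r.rels) ∧
      output attr I r.rels =
        restrict (attrsOf_mono attr Finset.subset_union_right) ''
          output attr I (l.rels ∪ r.rels) ∧
      MonotoneOn attr I l ∧ MonotoneOn attr I r

end JoinExpr

/-- Two tuples (over possibly different attribute sets) *agree* on their common attributes. -/
def AgreeOn {α : Type} {D : Type u} {X Y : Finset α} (t : Tuple D X) (s : Tuple D Y) : Prop :=
  ∀ (a : α) (ha : a ∈ X) (hb : a ∈ Y), t ⟨a, ha⟩ = s ⟨a, hb⟩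

/-- The semi-join `R ⋉ S` on the instance `I`: the tuples of `I.rel R` having a match
in `I.rel S` (a tuple agreeing with them on `attr R ∩ attr S`). -/
def semiJoin {D : Type u} (attr : ι → Finset α) (I : Inst attr D) (R S : ι) :
    Set (Tuple D (attr R)) :=
  {t ∈ I.rel R | ∃ s ∈ I.rel S, AgreeOn t s}

/-- The instance obtained from `I` by replacing the content of relation `R` with the
semi-join `R ⋉ S` (all other relations unchanged). -/
def Inst.semiJoinUpdate [DecidableEq ι] {attr : ι → Finset α} {D : Type u}
    (I : Inst attr D) (R S : ι) : Inst attr D where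
  rel := Function.update I.rel R (semiJoin attr I R S)
  finite := by
    intro R'
    rcases eq_or_ne R' R with rfl | h
    · rw [Function.update_self]
      exact (I.finite R').subset fun t ht => ht.1
    · rw [Function.update_of_ne h]
      exact I.finite R'

/-- The forward pass of the semi-join phase: process the vertices in the order given by
the list `L`; when processing a vertex `R`, successively replace its content by `R ⋉ S`
for each of its children `S` (listed by `childList R`). -/
def forwardPass [DecidableEq ι] {attr : ι → Finset α} {D : Type u}
    (I : Inst attr D) (L : List ι) (childList : ι → List ι) : Inst attr D :=
  L.foldl (fun J R => (childList R).foldl (fun K S => K.semiJoinUpdate R S) J) I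

/-- The backward pass of the semi-join phase: process the vertices in the order given by
the list `L`; when processing a non-root vertex `R`, replace its content by `R ⋉ par R`. -/
def backwardPass [DecidableEq ι] {attr : ι → Finset α} {D : Type u}
    (I : Inst attr D) (L : List ι) (r : ι) (par : ι → ι) : Inst attr D :=
  L.foldl (fun J R => if R = r then J else J.semiJoinUpdate R (par R)) I

end JoinQuery

namespace SimpleGraph

variable {V : Type*} {G : SimpleGraph V}

theorem ncard_edgeSet_induce (s : Set V) :
    Nat.card (G.induce s).edgeSet = {e ∈ G.edgeSet | ∀ v ∈ e, v ∈ s}.ncard := by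
  have : {e ∈ G.edgeSet | ∀ v ∈ e, v ∈ s} = Sym2.map Subtype.val '' (G.induce s).edgeSet := by
    ext e
    constructor
    · induction e using Sym2.ind with
      | _ u v =>
        rintro ⟨huv, hs⟩
        exact ⟨s(⟨u, hs u (Sym2.mem_mk_left u v)⟩, ⟨v, hs v (Sym2.mem_mk_right u v)⟩), huv, rfl⟩
    · rintro ⟨e, he, rfl⟩
      induction e using Sym2.ind with
      | _ u v => exact ⟨he, by simp⟩
  rw [this, Set.ncard_image_of_injective _ (Sym2.map.injective Subtype.val_injective),
    Nat.card_coe_set_eq]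

/- Both bounds compare `G` with a spanning tree of the complete graph containing it. -/

theorem IsAcyclic.card_edgeSet_add_one_le [Finite V] [Nonempty V] (hG : G.IsAcyclic) :
    Nat.card G.edgeSet + 1 ≤ Nat.card V := by
  obtain ⟨F, hGF, -, hF⟩ := connected_top.exists_isTree_le_of_le_of_isAcyclic le_top hG
  rw [← (isTree_iff_connected_and_card.1 hF).2, Nat.card_coe_set_eq, Nat.card_coe_set_eq]
  gcongr
  exact Set.toFinite _

theorem IsAcyclic.card_edgeSet_add_one_eq_iff [Finite V] [Nonempty V] (hG : G.IsAcyclic) :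
    Nat.card G.edgeSet + 1 = Nat.card V ↔ G.Connected := by
  refine ⟨fun hcard => ?_, fun hconn => (isTree_iff_connected_and_card.1 ⟨hconn, hG⟩).2⟩
  obtain ⟨F, hGF, -, hF⟩ := connected_top.exists_isTree_le_of_le_of_isAcyclic le_top hG
  have hFcard := (isTree_iff_connected_and_card.1 hF).2
  rw [Nat.card_coe_set_eq] at hcard hFcard
  have : G.edgeSet = F.edgeSet :=
    Set.eq_of_subset_of_ncard_le (edgeSet_mono hGF) (by omega) (Set.toFinite _)
  exact edgeSet_injective this ▸ hF.connected

end SimpleGraph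

namespace JoinQuery

universe v

open Finset

section

variable {ι α : Type} (attr : ι → Finset α)

theorem mem_attrsOf_univ [Fintype ι] [DecidableEq α] {A : α} :
    A ∈ attrsOf attr univ ↔ ∃ R, A ∈ attr R := by
  simp [attrsOf]

theorem edgeWeight_eq_card_filter [Fintype ι] [DecidableEq ι] [DecidableEq α] (e : Sym2 ι) :
    edgeWeight attr e = #{A ∈ attrsOf attr univ | ∀ R ∈ e, A ∈ attr R} := by
  induction e using Sym2.ind with
  | _ R S =>
    show #(attr R ∩ attr S) = _
    congr 1
    ext A
    simp only [mem_inter, Sym2.mem_iff, forall_eq_or_imp, forall_eq, mem_filter, iff_and_self,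
      and_imp]
    exact fun hR _ => attr_subset_attrsOf attr (mem_univ R) hR

theorem weight_eq_sum_eCount [Fintype ι] [DecidableEq α] (T : SimpleGraph ι) :
    weight attr T = ∑ A ∈ attrsOf attr univ, eCount attr T A := by
  classical
  rw [weight, ← SimpleGraph.coe_edgeFinset, finsum_mem_coe_finset]
  simp_rw [edgeWeight_eq_card_filter]
  refine (sum_card_bipartiteAbove_eq_sum_card_bipartiteBelow _).trans (sum_congr rfl fun A _ => ?_)
  rw [eCount, ← Set.ncard_coe_finset, bipartiteBelow, coe_filter]
  simp only [SimpleGraph.mem_edgeFinset]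

theorem eCount_eq_card_edgeSet_induce (T : SimpleGraph ι) (A : α) :
    eCount attr T A = Nat.card (T.induce {R | A ∈ attr R}).edgeSet :=
  (T.ncard_edgeSet_induce _).symm

variable [Finite ι] {T : SimpleGraph ι} {A : α}

theorem eCount_add_one_le_nCount (hT : T.IsAcyclic) (hA : ∃ R, A ∈ attr R) :
    eCount attr T A + 1 ≤ nCount attr A := by
  obtain ⟨R, hR⟩ := hA
  have : Nonempty {R | A ∈ attr R} := ⟨⟨R, hR⟩⟩
  rw [eCount_eq_card_edgeSet_induce, nCount, ← Nat.card_coe_set_eq]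
  exact (hT.induce _).card_edgeSet_add_one_le

theorem eCount_add_one_eq_nCount_iff (hT : T.IsAcyclic) (hA : ∃ R, A ∈ attr R) :
    eCount attr T A + 1 = nCount attr A ↔ (T.induce {R | A ∈ attr R}).Connected := by
  obtain ⟨R, hR⟩ := hA
  have : Nonempty {R | A ∈ attr R} := ⟨⟨R, hR⟩⟩
  rw [eCount_eq_card_edgeSet_induce, nCount, ← Nat.card_coe_set_eq]
  exact (hT.induce _).card_edgeSet_add_one_eq_iff

end

theorem weight_eq_sum_eCount_and_le_general {ι α : Type} [Fintype ι] [DecidableEq α]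
    (attr : ι → Finset α)
    (T : SimpleGraph ι) (hT : IsSpanningTree (joinGraph attr) T) :
    weight attr T = ∑ A ∈ attrsOf attr Finset.univ, eCount attr T A ∧
    ∑ A ∈ attrsOf attr Finset.univ, eCount attr T A ≤
      ∑ A ∈ attrsOf attr Finset.univ, (nCount attr A - 1) ∧
    ((∑ A ∈ attrsOf attr Finset.univ, eCount attr T A =
        ∑ A ∈ attrsOf attr Finset.univ, (nCount attr A - 1)) ↔ IsJoinTree attr T) := by
  have hacyc := hT.2.isAcyclic
  have hbound : ∀ A ∈ attrsOf attr univ, eCount attr T A + 1 ≤ nCount attr A := fun A hU =>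
    eCount_add_one_le_nCount attr hacyc ((mem_attrsOf_univ attr).1 hU)
  have hle : ∀ A ∈ attrsOf attr univ, eCount attr T A ≤ nCount attr A - 1 := fun A hU =>
    Nat.le_sub_one_of_lt (hbound A hU)
  refine ⟨weight_eq_sum_eCount attr T, sum_le_sum hle, ?_⟩
  rw [sum_eq_sum_iff_of_le hle]
  refine ⟨fun h => ⟨hT, fun A hA => ?_⟩, fun h A hU => ?_⟩
  · have hU := (mem_attrsOf_univ attr).2 hA
    exact (eCount_add_one_eq_nCount_iff attr hacyc hA).1
      (by have := hbound A hU; have := h A hU; omega)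
  · have hA := (mem_attrsOf_univ attr).1 hU
    have := (eCount_add_one_eq_nCount_iff attr hacyc hA).2 (h.2 A hA)
    omega

theorem weight_eq_sum_eCount_and_le {ι α : Type} [Fintype ι] [DecidableEq α]
    (attr : ι → Finset α) (hattr : ∀ R : ι, (attr R).Nonempty)
    (hconn : (joinGraph attr).Connected)
    (T : SimpleGraph ι) (hT : IsSpanningTree (joinGraph attr) T) :
    weight attr T = ∑ A ∈ attrsOf attr Finset.univ, eCount attr T A ∧
    ∑ A ∈ attrsOf attr Finset.univ, eCount attr T A ≤
      ∑ A ∈ attrsOf attr Finset.univ, (nCount attr A - 1) ∧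
    ((∑ A ∈ attrsOf attr Finset.univ, eCount attr T A =
        ∑ A ∈ attrsOf attr Finset.univ, (nCount attr A - 1)) ↔ IsJoinTree attr T) :=
  weight_eq_sum_eCount_and_le_general attr T hT

end JoinQuery
end

section
/- Let q be a natural join query with connected join graph. If q is γ-acyclic, then every connected subjoin of q is safe. -/
/-!
On a pairwise consistent instance (fully reduced ones are), a tuple of the join of a connected
set `S` of relations extends to `S ∪ {R}` as soon as one `S₀ ∈ S` contains every attribute that
`R` shares with `S`: glue it to a tuple of `R` that matches its restriction to `S₀`. Adding
relations one neighbour at a time then extends it to the full join. In a γ-acyclic query such an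
`S₀` exists: the shared attributes are covered one at a time, using medians in a join tree, and
the only obstruction to a step is a γ-cycle of size 3.
-/

namespace SimpleGraph

variable {V : Type*} {G T : SimpleGraph V}

theorem Preconnected.exists_walk_support_subset_of_induce {s : Set V}
    (hs : (G.induce s).Preconnected) {u v : V} (hu : u ∈ s) (hv : v ∈ s) :
    ∃ w : G.Walk u v, ∀ x ∈ w.support, x ∈ s := by
  obtain ⟨w⟩ := hs ⟨u, hu⟩ ⟨v, hv⟩
  refine ⟨w.map (Embedding.induce s).toHom, fun x hx => ?_⟩
  obtain ⟨y, -, rfl⟩ := List.mem_map.1 (w.support_map _ ▸ hx)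
  exact y.2

theorem IsAcyclic.support_subset_of_induce (hT : T.IsAcyclic) {s : Set V}
    (hs : (T.induce s).Preconnected) {u v : V} (hu : u ∈ s) (hv : v ∈ s) {p : T.Walk u v}
    (hp : p.IsPath) : ∀ x ∈ p.support, x ∈ s := by
  classical
  obtain ⟨w, hw⟩ := hs.exists_walk_support_subset_of_induce hu hv
  obtain rfl : p = w.bypass :=
    congrArg Subtype.val ((hT.subsingleton_path u v).elim ⟨p, hp⟩ ⟨_, w.bypass_isPath⟩)
  exact fun x hx => hw x (w.support_bypass_subset_support hx)

theorem IsAcyclic.exists_median (hT : T.IsAcyclic) {r x y : V}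
    (W : T.Walk x y) {p : T.Walk r x} {q : T.Walk r y} (hp : p.IsPath) (hq : q.IsPath) :
    ∃ m ∈ W.support, m ∈ p.support ∧ m ∈ q.support := by
  classical
  induction W with
  | nil => exact ⟨_, Walk.start_mem_support _, p.end_mem_support, q.end_mem_support⟩
  | @cons x x' y h W ih =>
    by_cases hx' : x' ∈ p.support
    · obtain ⟨m, hmW, hmp, hmq⟩ := ih (hp.takeUntil hx') hq
      exact ⟨m, List.mem_cons_of_mem _ hmW, p.support_takeUntil_subset_support hx' hmp, hmq⟩
    · obtain ⟨m, hmW, hmp, hmq⟩ := ih (hp.concat hx' h) hq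
      rw [Walk.support_concat, List.mem_append, List.mem_singleton] at hmp
      rcases hmp with hmp | rfl
      · exact ⟨m, List.mem_cons_of_mem _ hmW, hmp, hmq⟩
      refine ⟨x, W.support_cons h ▸ List.mem_cons_self, p.end_mem_support, ?_⟩
      obtain hq' : q.takeUntil m hmq = p.concat h := congrArg Subtype.val
        ((hT.subsingleton_path r m).elim ⟨_, hq.takeUntil hmq⟩ ⟨_, hp.concat hx' h⟩)
      apply q.support_takeUntil_subset_support hmq
      rw [hq', Walk.support_concat]
      exact List.mem_append_left _ p.end_mem_support

/-- Replace each edge of `w` by a `T`-path between its ends. -/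
theorem Connected.exists_walk_of_walk (hT : T.Connected) {u v : V} (w : G.Walk u v) :
    ∃ W : T.Walk u v, ∀ m ∈ W.support, m = v ∨
      ∃ (z₁ z₂ : V) (h : G.Adj z₁ z₂) (w₁ : G.Walk u z₁) (w₂ : G.Walk z₂ v) (p : T.Walk z₁ z₂),
        w = w₁.append (Walk.cons h w₂) ∧ p.IsPath ∧ m ∈ p.support := by
  classical
  induction w with
  | nil => exact ⟨Walk.nil, fun m hm => Or.inl (by simpa using hm)⟩
  | @cons u u' v h w ih =>
    obtain ⟨W, hW⟩ := ih
    obtain ⟨p⟩ := hT.preconnected u u'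
    refine ⟨p.bypass.append W, fun m hm => ?_⟩
    rcases Walk.mem_support_append_iff _ _ |>.1 hm with hm | hm
    · exact Or.inr ⟨u, u', h, Walk.nil, w, p.bypass, rfl, p.bypass_isPath, hm⟩
    rcases hW m hm with rfl | ⟨z₁, z₂, h', w₁, w₂, p', rfl, hp', hm'⟩
    · exact Or.inl rfl
    · exact Or.inr ⟨z₁, z₂, h', Walk.cons h w₁, w₂, p', rfl, hp', hm'⟩

end SimpleGraph

namespace JoinQuery

universe u v

variable {ι α : Type} [DecidableEq α] {attr : ι → Finset α}

open SimpleGraph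

theorem GammaAcyclic.mem_or_mem_of_triangle (hγ : GammaAcyclic attr) {R S T : ι} {x y z : α}
    (hxR : x ∈ attr R) (hyR : y ∈ attr R) (hyS : y ∈ attr S) (hzS : z ∈ attr S)
    (hxT : x ∈ attr T) (hyT : y ∈ attr T) (hzT : z ∈ attr T) :
    z ∈ attr R ∨ x ∈ attr S := by
  by_contra! ⟨hzR, hxS⟩
  exact hγ.2 ⟨R, S, T, x, y, z, fun h => hxS (h ▸ hxR), fun h => hzR (h ▸ hzT),
    fun h => hxS (h ▸ hxT), fun h => hxS (h ▸ hyS), fun h => hxS (h ▸ hzS),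
    fun h => hzR (h ▸ hyR), hxR, hyR, hyS, hzS, hxT, hyT, hzT⟩

theorem IsJoinTree.mem_attr_of_mem_support {T : SimpleGraph ι} (hT : IsJoinTree attr T)
    {a : α} {u v x : ι} (hu : a ∈ attr u) (hv : a ∈ attr v) {p : T.Walk u v} (hp : p.IsPath)
    (hx : x ∈ p.support) : a ∈ attr x :=
  hT.1.2.isAcyclic.support_subset_of_induce (hT.2 a ⟨u, hu⟩).preconnected hu hv hp x hx

/-- The median `m` of `R`, `z₀`, `zn` in the join tree contains `A` and `c`. If it is not on `w`,
it lies on the tree path of an edge `z₁ z₂` of `w`, hence contains some `y ∈ z₁ ∩ z₂`. Recursing on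
both halves of `w` with `m` in place of `R` gives `t₁ ⊇ A ∪ {y}` and `t₂ ⊇ {y, c}`; if neither
works, `t₁`, `t₂`, `m` form a γ-cycle. -/
theorem exists_mem_support_insert_subset_attr (hγ : GammaAcyclic attr) {T : SimpleGraph ι}
    (hT : IsJoinTree attr T) {z₀ zn : ι} (w : (joinGraph attr).Walk z₀ zn) {R : ι}
    {A : Finset α} {c : α} (hAR : A ⊆ attr R) (hA₀ : A ⊆ attr z₀) (hcR : c ∈ attr R)
    (hcn : c ∈ attr zn) : ∃ t ∈ w.support, insert c A ⊆ attr t := by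
  classical
  have hTc : T.Connected := hT.1.2.connected
  obtain ⟨W, hW⟩ := hTc.exists_walk_of_walk w
  obtain ⟨p₀⟩ := hTc.preconnected R z₀
  obtain ⟨pn⟩ := hTc.preconnected R zn
  obtain ⟨m, hmW, hm₀, hmn⟩ :=
    hT.1.2.isAcyclic.exists_median W p₀.bypass_isPath pn.bypass_isPath
  have hAm : A ⊆ attr m := fun a ha =>
    hT.mem_attr_of_mem_support (hAR ha) (hA₀ ha) p₀.bypass_isPath hm₀
  have hcm : c ∈ attr m := hT.mem_attr_of_mem_support hcR hcn pn.bypass_isPath hmn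
  rcases hW m hmW with rfl | ⟨z₁, z₂, h, w₁, w₂, p, hw, hp, hmp⟩
  · exact ⟨m, w.end_mem_support, Finset.insert_subset hcm hAm⟩
  obtain ⟨y, hy⟩ := h.2
  obtain ⟨hy₁, hy₂⟩ := Finset.mem_inter.1 hy
  have hym : y ∈ attr m := hT.mem_attr_of_mem_support hy₁ hy₂ hp hmp
  obtain ⟨t₁, ht₁, hyAt₁⟩ := exists_mem_support_insert_subset_attr hγ hT w₁ hAm hA₀ hym hy₁
  obtain ⟨t₂, ht₂, hcyt₂⟩ := exists_mem_support_insert_subset_attr hγ hT w₂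
    (Finset.singleton_subset_iff.2 hym) (Finset.singleton_subset_iff.2 hy₂) hcm hcn
  have ht₁w : t₁ ∈ w.support := hw ▸ Walk.mem_support_append_iff _ _ |>.2 (Or.inl ht₁)
  have ht₂w : t₂ ∈ w.support :=
    hw ▸ Walk.mem_support_append_iff _ _ |>.2 (Or.inr (List.mem_cons_of_mem _ ht₂))
  have hct₂ : c ∈ attr t₂ := hcyt₂ (Finset.mem_insert_self _ _)
  by_cases hAt₂ : A ⊆ attr t₂
  · exact ⟨t₂, ht₂w, Finset.insert_subset hct₂ hAt₂⟩
  obtain ⟨a, haA, hat₂⟩ := Finset.not_subset.1 hAt₂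
  have hct₁ : c ∈ attr t₁ := (hγ.mem_or_mem_of_triangle (hyAt₁ (Finset.mem_insert_of_mem haA))
    (hyAt₁ (Finset.mem_insert_self _ _)) (hcyt₂ (by simp)) hct₂ (hAm haA) hym hcm).resolve_right
    hat₂
  exact ⟨t₁, ht₁w, Finset.insert_subset hct₁ ((Finset.subset_insert _ _).trans hyAt₁)⟩
termination_by w.length
decreasing_by all_goals rw [hw, Walk.length_append, Walk.length_cons]; omega

theorem GammaAcyclic.exists_inter_attrsOf_subset (hγ : GammaAcyclic attr) {S : Finset ι}
    (hS : ((joinGraph attr).induce (S : Set ι)).Connected) (R : ι) :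
    ∃ S₀ ∈ S, attr R ∩ attrsOf attr S ⊆ attr S₀ := by
  obtain ⟨T, hT⟩ := hγ.1
  suffices ∀ B ⊆ attr R ∩ attrsOf attr S, ∃ S₀ ∈ S, B ⊆ attr S₀ from this _ subset_rfl
  intro B
  induction B using Finset.induction_on with
  | empty =>
    obtain ⟨⟨S₀, hS₀⟩⟩ := hS.nonempty
    exact fun _ => ⟨S₀, hS₀, Finset.empty_subset _⟩
  | insert c B _ ih =>
    intro hcB
    obtain ⟨hc, hB⟩ := Finset.insert_subset_iff.1 hcB
    obtain ⟨hcR, hcS⟩ := Finset.mem_inter.1 hc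
    obtain ⟨P, hP, hcP⟩ := Finset.mem_biUnion.1 hcS
    obtain ⟨S₀, hS₀, hBS₀⟩ := ih hB
    obtain ⟨w, hw⟩ := hS.preconnected.exists_walk_support_subset_of_induce hS₀ hP
    obtain ⟨t, ht, hct⟩ := exists_mem_support_insert_subset_attr hγ hT w
      (hB.trans Finset.inter_subset_left) hBS₀ hcR hcP
    exact ⟨t, hw t ht, hct⟩

section Instance

variable {D : Type u}

def PairwiseConsistent (I : Inst attr D) : Prop :=
  ∀ R S : ι, semiJoin attr I R S = I.rel R

theorem FullyReduced.pairwiseConsistent [Fintype ι] {I : Inst attr D}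
    (hI : FullyReduced attr I) : PairwiseConsistent I := by
  refine fun R S => subset_antisymm (fun t ht => ht.1) fun t ht => ⟨ht, ?_⟩
  rw [hI R] at ht
  obtain ⟨u, hu, rfl⟩ := ht
  exact ⟨restrict (attr_subset_attrsOf attr (Finset.mem_univ S)) u, hu S (Finset.mem_univ S),
    fun _ _ _ => rfl⟩

theorem image_restrict_fullOutput_subset_output [Fintype ι] (I : Inst attr D) (S : Finset ι) :
    restrict (attrsOf_mono attr (Finset.subset_univ S)) '' fullOutput attr I ⊆ output attr I S := by
  rintro _ ⟨u, hu, rfl⟩ R hR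
  exact hu R (Finset.mem_univ R)

def glue {X Y Z : Finset α} (t : Tuple D X) (s : Tuple D Y) (h : Z ⊆ X ∪ Y) : Tuple D Z :=
  fun a => if ha : a.1 ∈ X then t ⟨a.1, ha⟩
    else s ⟨a.1, (Finset.mem_union.1 (h a.2)).resolve_left ha⟩

variable {X Y Z W : Finset α}

theorem restrict_glue_of_subset_left {t : Tuple D X} {s : Tuple D Y} {h : Z ⊆ X ∪ Y}
    (hWZ : W ⊆ Z) (hWX : W ⊆ X) :
    restrict hWZ (glue t s h) = restrict hWX t := by
  funext a
  simp [restrict, glue, hWX a.2]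

theorem restrict_glue_of_agreeOn {t : Tuple D X} {s : Tuple D Y} {h : Z ⊆ X ∪ Y}
    (hts : AgreeOn t s) (hWZ : W ⊆ Z) (hWY : W ⊆ Y) :
    restrict hWZ (glue t s h) = restrict hWY s := by
  funext a
  simp only [restrict, glue]
  split_ifs with ha
  exacts [hts a.1 ha (hWY a.2), rfl]

variable [DecidableEq ι] {I : Inst attr D}

theorem output_subset_image_output_insert (hI : PairwiseConsistent I) {S : Finset ι}
    {S₀ R : ι} (hS₀ : S₀ ∈ S) (hcov : attr R ∩ attrsOf attr S ⊆ attr S₀) :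
    output attr I S ⊆
      restrict (attrsOf_mono attr (Finset.subset_insert R S)) '' output attr I (insert R S) := by
  intro t ht
  obtain ⟨-, r, hr, hagree⟩ := (hI S₀ R).symm ▸ ht S₀ hS₀
  have htr : AgreeOn t r := fun a ha haR => hagree a (hcov (Finset.mem_inter.2 ⟨haR, ha⟩)) haR
  have hsub : attrsOf attr (insert R S) ⊆ attrsOf attr S ∪ attr R := by
    rw [attrsOf, Finset.biUnion_insert, Finset.union_comm]
    rfl
  refine ⟨glue t r hsub, fun R' hR' => ?_, restrict_glue_of_subset_left _ subset_rfl⟩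
  rcases Finset.mem_insert.1 hR' with rfl | hR'S
  · rw [restrict_glue_of_agreeOn htr _ subset_rfl]
    exact hr
  · rw [restrict_glue_of_subset_left _ (attr_subset_attrsOf attr hR'S)]
    exact ht R' hR'S

theorem output_subset_image_fullOutput [Fintype ι] (hconn : (joinGraph attr).Connected)
    (hγ : GammaAcyclic attr) (hI : PairwiseConsistent I) (S : Finset ι)
    (hS : ((joinGraph attr).induce (S : Set ι)).Connected) :
    output attr I S ⊆ restrict (attrsOf_mono attr (Finset.subset_univ S)) '' fullOutput attr I := by
  by_cases hSu : S = Finset.univ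
  · subst hSu
    exact fun t ht => ⟨t, ht, rfl⟩
  obtain ⟨R, hR⟩ : ∃ R, R ∉ S := by simpa [Finset.eq_univ_iff_forall] using hSu
  obtain ⟨⟨P, hP⟩⟩ := hS.nonempty
  obtain ⟨d, -, hd₁, hd₂⟩ :=
    (hconn.preconnected P R).some.exists_boundary_dart (S : Set ι) hP hR
  obtain ⟨S₀, hS₀, hcov⟩ := hγ.exists_inter_attrsOf_subset hS d.snd
  have hS' : ((joinGraph attr).induce ↑(insert d.snd S)).Connected := by
    rw [Finset.coe_insert]
    have := induce_union_connected hS.preconnected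
      (induce_pair_connected_of_adj d.adj).preconnected ⟨d.fst, hd₁, by simp⟩
    rwa [Set.union_insert, Set.union_singleton,
      Set.insert_eq_of_mem (Set.mem_insert_of_mem _ hd₁)] at this
  calc output attr I S
      ⊆ restrict _ '' output attr I (insert d.snd S) :=
        output_subset_image_output_insert hI hS₀ hcov
    _ ⊆ restrict _ '' (restrict _ '' fullOutput attr I) :=
        Set.image_mono (output_subset_image_fullOutput hconn hγ hI _ hS')
    _ = _ := Set.image_image _ _ _
termination_by Sᶜ.card
decreasing_by
  rw [Finset.compl_insert]
  exact Finset.card_erase_lt_of_mem (Finset.mem_compl.2 hd₂)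

end Instance

theorem safe_of_gammaAcyclic_general {ι α : Type} [Fintype ι] [DecidableEq α]
    (attr : ι → Finset α)
    (hconn : (joinGraph attr).Connected)
    (hγ : GammaAcyclic attr) :
    ∀ S : Finset ι, ConnectedSubjoin attr S → Safe.{v} attr S := by
  classical
  intro S hS D I hI
  exact (output_subset_image_fullOutput hconn hγ hI.pairwiseConsistent S hS.2).antisymm
    (image_restrict_fullOutput_subset_output I S)

theorem safe_of_gammaAcyclic {ι α : Type} [Fintype ι] [DecidableEq α]
    (attr : ι → Finset α) (hattr : ∀ R : ι, (attr R).Nonempty)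
    (hconn : (joinGraph attr).Connected)
    (hγ : GammaAcyclic attr) :
    ∀ S : Finset ι, ConnectedSubjoin attr S → Safe.{v} attr S :=
  safe_of_gammaAcyclic_general attr hconn hγ

end JoinQuery
end

section
/- Let q be a natural join query with connected join graph. If every connected join expression of q is monotone on every fully reduced instance, then every connected subjoin of q is safe. -/
namespace JoinQuery

universe v

/-!
Starting from one relation of `S`, grow a left-deep connected join expression by repeatedly
joining a relation adjacent to one already used: first until all of `S` is covered (possible since
`S` is connected), then until every relation is (possible since the join graph is connected). The
subexpression computing `S` then lies on the path to the root, and monotonicity at each node of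
that path says that the join there removes no tuple of its input, so `S(I)` is the projection
of `q(I)`.
-/

variable {ι α : Type}

theorem exists_adj_of_ssubset {G : SimpleGraph ι} {S A : Finset ι}
    (hS : (G.induce (S : Set ι)).Connected) (hA : A.Nonempty) (hAS : A ⊂ S) :
    ∃ a ∈ A, ∃ b ∈ S, b ∉ A ∧ G.Adj a b := by
  obtain ⟨a, ha⟩ := hA
  obtain ⟨b, hbS, hbA⟩ := Finset.exists_of_ssubset hAS
  obtain ⟨w⟩ := hS.preconnected ⟨a, hAS.subset ha⟩ ⟨b, hbS⟩
  obtain ⟨d, -, hd, hd'⟩ := w.exists_boundary_dart {x | x.1 ∈ A} ha hbA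
  exact ⟨_, hd, _, d.snd.2, hd', d.adj⟩

namespace JoinExpr

theorem mem_leaves_iff_mem_rels [DecidableEq ι] {R : ι} :
    ∀ θ : JoinExpr ι, R ∈ θ.leaves ↔ R ∈ θ.rels
  | leaf _ => by simp [leaves, rels]
  | node l r => by simp [leaves, rels, mem_leaves_iff_mem_rels l, mem_leaves_iff_mem_rels r]

theorem rels_nonempty [DecidableEq ι] : ∀ θ : JoinExpr ι, θ.rels.Nonempty
  | leaf R => ⟨R, Finset.mem_singleton_self R⟩
  | node l _ => (rels_nonempty l).mono Finset.subset_union_left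

inductive IsSubexpr : JoinExpr ι → JoinExpr ι → Prop
  | refl (θ : JoinExpr ι) : IsSubexpr θ θ
  | left {θ l : JoinExpr ι} (r : JoinExpr ι) : IsSubexpr θ l → IsSubexpr θ (node l r)
  | right {θ r : JoinExpr ι} (l : JoinExpr ι) : IsSubexpr θ r → IsSubexpr θ (node l r)

theorem IsSubexpr.trans {θ₁ θ₂ θ₃ : JoinExpr ι} (h₁₂ : IsSubexpr θ₁ θ₂)
    (h₂₃ : IsSubexpr θ₂ θ₃) : IsSubexpr θ₁ θ₃ := by
  induction h₂₃ with
  | refl => exact h₁₂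
  | left r _ ih => exact .left r ih
  | right l _ ih => exact .right l ih

theorem IsSubexpr.rels_subset [DecidableEq ι] {θ θ' : JoinExpr ι} (h : θ.IsSubexpr θ') :
    θ.rels ⊆ θ'.rels := by
  induction h with
  | refl => exact Finset.Subset.refl _
  | left r _ ih => exact ih.trans Finset.subset_union_left
  | right l _ ih => exact ih.trans Finset.subset_union_right

/-- `U` is separate from `θ'.rels` so that the lemma applies when `θ'.rels = univ` holds only
propositionally. -/
theorem output_eq_image_of_isSubexpr [DecidableEq ι] [DecidableEq α] {D : Type v}
    {attr : ι → Finset α} {I : Inst attr D} {θ θ' : JoinExpr ι} (hsub : θ.IsSubexpr θ')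
    (hmono : MonotoneOn attr I θ') {U : Finset ι} (hU : θ'.rels = U)
    (h : attrsOf attr θ.rels ⊆ attrsOf attr U) :
    output attr I θ.rels = restrict h '' output attr I U := by
  subst hU
  induction hsub with
  | refl => exact (Set.image_id' _).symm
  | left r hsub ih =>
    obtain ⟨hl, -, hmono_l, -⟩ := hmono
    rw [ih hmono_l (attrsOf_mono attr hsub.rels_subset), hl, Set.image_image]
    rfl
  | right l hsub ih =>
    obtain ⟨-, hr, -, hmono_r⟩ := hmono
    rw [ih hmono_r (attrsOf_mono attr hsub.rels_subset), hr, Set.image_image]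
    rfl

theorem exists_isSubexpr_rels_eq [DecidableEq ι] [DecidableEq α] {attr : ι → Finset α}
    {S : Finset ι} (hS : ((joinGraph attr).induce (S : Set ι)).Connected) (θ : JoinExpr ι)
    (hθS : θ.rels ⊆ S) (hnodup : θ.leaves.Nodup) (hθ : θ.ConnectedExpr (joinGraph attr)) :
    ∃ θ' : JoinExpr ι, θ.IsSubexpr θ' ∧ θ'.rels = S ∧ θ'.leaves.Nodup ∧
      θ'.ConnectedExpr (joinGraph attr) := by
  rcases hθS.eq_or_ssubset with hθS | hθS
  · exact ⟨θ, .refl θ, hθS, hnodup, hθ⟩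
  obtain ⟨a, ha, b, hbS, hbθ, hab⟩ := exists_adj_of_ssubset hS θ.rels_nonempty hθS
  have hnodup' : (node θ (leaf b)).leaves.Nodup := by
    simpa [leaves, List.nodup_append, mem_leaves_iff_mem_rels] using ⟨hnodup, hbθ⟩
  obtain ⟨θ', hsub, hrels, hnodup'', hθ'⟩ := exists_isSubexpr_rels_eq hS (node θ (leaf b))
    (Finset.union_subset hθS.subset (Finset.singleton_subset_iff.2 hbS)) hnodup'
    ⟨⟨a, ha, b, Finset.mem_singleton_self b, hab⟩, hθ, trivial⟩
  exact ⟨θ', (IsSubexpr.left _ (.refl θ)).trans hsub, hrels, hnodup'', hθ'⟩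
termination_by (S \ θ.rels).card
decreasing_by
  refine Finset.card_lt_card ⟨Finset.sdiff_subset_sdiff le_rfl Finset.subset_union_left, ?_⟩
  intro h
  simpa [rels] using h (Finset.mem_sdiff.2 ⟨hbS, hbθ⟩)

end JoinExpr

open JoinExpr

theorem safe_of_monotone_general {ι α : Type} [Fintype ι] [DecidableEq ι] [DecidableEq α]
    (attr : ι → Finset α)
    (hconn : (joinGraph attr).Connected)
    (hmono : ∀ θ : JoinExpr ι, θ.Complete → JoinExpr.ConnectedExpr (joinGraph attr) θ →
      ∀ (D : Type v) (I : Inst attr D), FullyReduced attr I →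
        JoinExpr.MonotoneOn attr I θ) :
    ∀ S : Finset ι, ConnectedSubjoin attr S → Safe.{v} attr S := by
  rintro S ⟨⟨R₀, hR₀⟩, hS⟩ D I hI
  obtain ⟨θS, -, rfl, hnodupS, hθS⟩ := exists_isSubexpr_rels_eq hS (.leaf R₀)
    (Finset.singleton_subset_iff.2 hR₀) (List.nodup_singleton R₀) trivial
  have huniv : ((joinGraph attr).induce ((Finset.univ : Finset ι) : Set ι)).Connected := by
    rw [Finset.coe_univ]
    exact (joinGraph attr).induceUnivIso.connected_iff.2 hconn
  obtain ⟨θ, hsub, hrels, hnodup, hθ⟩ :=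
    exists_isSubexpr_rels_eq huniv θS (Finset.subset_univ _) hnodupS hθS
  have hcomplete : θ.Complete :=
    ⟨hnodup, fun R => (mem_leaves_iff_mem_rels θ).2 (hrels ▸ Finset.mem_univ R)⟩
  exact output_eq_image_of_isSubexpr hsub (hmono θ hcomplete hθ D I hI) hrels _

theorem safe_of_monotone {ι α : Type} [Fintype ι] [DecidableEq ι] [DecidableEq α]
    (attr : ι → Finset α) (hattr : ∀ R : ι, (attr R).Nonempty)
    (hconn : (joinGraph attr).Connected)
    (hmono : ∀ θ : JoinExpr ι, θ.Complete → JoinExpr.ConnectedExpr (joinGraph attr) θ →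
      ∀ (D : Type v) (I : Inst attr D), FullyReduced attr I →
        JoinExpr.MonotoneOn attr I θ) :
    ∀ S : Finset ι, ConnectedSubjoin attr S → Safe.{v} attr S :=
  safe_of_monotone_general attr hconn hmono

end JoinQuery
end

section
/- Let q be a natural join query with connected join graph. If q is γ-acyclic, then every connected join expression of q is monotone on every fully reduced instance. -/
/-!
At a node of a connected join expression, both children and the node are connected subjoins, so
it suffices that the join of every connected set `S` of relations is, on a fully reduced
instance, the projection of the full join (`Safe`). Induct on the complement of `S`: for `N`
adjacent to `S`, a tuple of the join of `S` extends to `S ∪ {N}` by gluing in a full-output tuple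
that agrees with it on a relation `Rc ∈ S` containing all attributes that `N` shares with `S`.

γ-acyclicity provides `Rc`. Any two such attributes `a, b` lie together in a relation of `S`: the
join-tree median `m'` of `N` and of relations `u, v ∈ S` holding `a`, `b` holds both; an edge
`q q'` of a walk from `u` to `v` inside `S` has `m'` on its tree path, so `m'` holds some
`c ∈ q ∩ q'`; by induction on the two pieces of the walk, relations of `S` hold `a, c` and `c, b`,
and with `m'` they form a γ-cycle unless one of the three works. A relation of `S` sharing the
most of these attributes with `N` then holds all of them, as otherwise it forms a γ-cycle with `N`
and a relation of `S` holding a missing attribute and a present one.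
-/

namespace SimpleGraph

variable {V : Type*}

/-- `m` is the first vertex of `p` in `A`. -/
theorem Walk.exists_mem_forall_mem_support_takeUntil [DecidableEq V] {G : SimpleGraph V}
    {A : Set V} {u v : V} (p : G.Walk u v) (hv : v ∈ A) :
    ∃ m ∈ A, ∃ hm : m ∈ p.support, ∀ x ∈ (p.takeUntil m hm).support, x ∈ A → x = m := by
  induction p with
  | nil => exact ⟨_, hv, Walk.start_mem_support _, by simp⟩
  | @cons u c w h p ih =>
    by_cases hu : u ∈ A
    · exact ⟨u, hu, (Walk.cons h p).start_mem_support, by simp⟩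
    obtain ⟨m, hmA, hm, hfirst⟩ := ih hv
    refine ⟨m, hmA, List.mem_cons_of_mem _ hm, ?_⟩
    rw [Walk.takeUntil_cons hm (ne_of_mem_of_not_mem hmA hu).symm, Walk.support_cons]
    rintro x (_ | ⟨_, hx⟩) hxA
    · exact absurd hxA hu
    · exact hfirst x hx hxA

theorem Walk.mem_of_mem_support_map_induce {G : SimpleGraph V} {s : Set V} {u v : s}
    (p : (G.induce s).Walk u v) {x : V} (hx : x ∈ (p.map (Embedding.induce s).toHom).support) :
    x ∈ s := by
  rw [Walk.support_map, List.mem_map] at hx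
  obtain ⟨y, -, rfl⟩ := hx
  exact y.2

namespace IsTree

variable {T : SimpleGraph V} (hT : T.IsTree)

noncomputable def path (u v : V) : T.Walk u v :=
  (hT.existsUnique_path u v).choose

theorem isPath_path (u v : V) : (hT.path u v).IsPath :=
  (hT.existsUnique_path u v).choose_spec.1

theorem eq_path {u v : V} {p : T.Walk u v} (hp : p.IsPath) : p = hT.path u v :=
  (hT.existsUnique_path u v).choose_spec.2 p hp

theorem support_path_subset {u v : V} (p : T.Walk u v) :
    (hT.path u v).support ⊆ p.support := by
  classical
  rw [← hT.eq_path p.bypass_isPath]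
  exact p.support_bypass_subset_support

theorem eq_of_mem_support_path_self {u x : V} (hx : x ∈ (hT.path u u).support) : x = u := by
  simpa using hT.support_path_subset Walk.nil hx

theorem mem_support_path_or {u v x : V} (w : V) (hx : x ∈ (hT.path u v).support) :
    x ∈ (hT.path u w).support ∨ x ∈ (hT.path w v).support :=
  (Walk.mem_support_append_iff _ _).1 <|
    hT.support_path_subset ((hT.path u w).append (hT.path w v)) hx

theorem exists_median (u v w : V) :
    ∃ m, m ∈ (hT.path u v).support ∧ m ∈ (hT.path v w).support ∧
      m ∈ (hT.path u w).support := by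
  classical
  set q := (hT.path u v).reverse
  set r := hT.path u w
  obtain ⟨m, hmr, hmq, hfirst⟩ :=
    q.exists_mem_forall_mem_support_takeUntil (A := {x | x ∈ r.support}) r.start_mem_support
  -- `m` is the first vertex of `q` on `r`, so `q` up to `m` followed by `r` from `m` is a path.
  have hpath : ((q.takeUntil m hmq).append (r.dropUntil m hmr)).IsPath := by
    have hr : (r.dropUntil m hmr).IsPath := (hT.isPath_path u w).dropUntil hmr
    rw [Walk.isPath_def, Walk.support_append]
    refine ((hT.isPath_path u v).reverse.takeUntil hmq).support_nodup.append
      ((List.tail_sublist _).nodup hr.support_nodup) fun x hxq hxr => ?_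
    obtain rfl := hfirst x hxq (r.support_dropUntil_subset_support hmr (List.mem_of_mem_tail hxr))
    rw [Walk.isPath_def, ← Walk.cons_tail_support] at hr
    exact (List.nodup_cons.1 hr).1 hxr
  refine ⟨m, by simpa [q] using hmq, ?_, hmr⟩
  rw [← hT.eq_path hpath]
  exact (Walk.mem_support_append_iff _ _).2 (Or.inl (Walk.end_mem_support _))

/-- The tree path between the ends of a walk is covered by the tree paths of its edges. -/
theorem exists_append_cons_of_mem_support_path {G : SimpleGraph V} {u v x : V}
    (p : G.Walk u v) (hx : x ∈ (hT.path u v).support) :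
    x = u ∨ ∃ (q q' : V) (h : G.Adj q q') (p₁ : G.Walk u q) (p₂ : G.Walk q' v),
      p = p₁.append (Walk.cons h p₂) ∧ x ∈ (hT.path q q').support := by
  induction p with
  | nil => exact Or.inl (hT.eq_of_mem_support_path_self hx)
  | @cons u c v h p ih =>
    rcases hT.mem_support_path_or c hx with hxc | hxc
    · exact Or.inr ⟨u, c, h, Walk.nil, p, by simp, hxc⟩
    rcases ih hxc with rfl | ⟨q, q', hqq', p₁, p₂, rfl, hxq⟩
    · exact Or.inr ⟨u, x, h, Walk.nil, p, by simp, (hT.path u x).end_mem_support⟩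
    · exact Or.inr ⟨q, q', hqq', Walk.cons h p₁, p₂, by simp, hxq⟩

end IsTree

end SimpleGraph

namespace JoinQuery

universe v

open SimpleGraph

variable {ι α : Type} [DecidableEq α] {attr : ι → Finset α}

theorem IsJoinTree.mem_attr_of_mem_support_path {T : SimpleGraph ι} (hJT : IsJoinTree attr T)
    {A : α} {u v x : ι} (hu : A ∈ attr u) (hv : A ∈ attr v)
    (hx : x ∈ (hJT.1.2.path u v).support) : A ∈ attr x := by
  obtain ⟨p⟩ := (hJT.2 A ⟨u, hu⟩).preconnected ⟨u, hu⟩ ⟨v, hv⟩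
  exact p.mem_of_mem_support_map_induce (hJT.1.2.support_path_subset _ hx)

theorem GammaAcyclic.connected_joinGraph (hγ : GammaAcyclic attr) : (joinGraph attr).Connected :=
  have ⟨_, hJT⟩ := hγ.1
  hJT.1.2.connected.mono hJT.1.1

theorem GammaAcyclic.eq_or_eq_of_mem_attr {R S T : ι} {x y z : α} (hγ : GammaAcyclic attr)
    (hxR : x ∈ attr R) (hyR : y ∈ attr R) (hyS : y ∈ attr S) (hzS : z ∈ attr S)
    (hxT : x ∈ attr T) (hyT : y ∈ attr T) (hzT : z ∈ attr T)
    (hxS : x ∉ attr S) (hzR : z ∉ attr R) : T = R ∨ T = S := by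
  by_contra! hne
  exact hγ.2 ⟨R, S, T, x, y, z, fun h => hxS (h ▸ hxR), hne.1.symm, hne.2.symm,
    (ne_of_mem_of_not_mem hyS hxS).symm, (ne_of_mem_of_not_mem hxR hzR),
    ne_of_mem_of_not_mem hyR hzR, hxR, hyR, hyS, hzS, hxT, hyT, hzT⟩

theorem GammaAcyclic.exists_mem_attr_pair_of_walk (hγ : GammaAcyclic attr) {S : Set ι}
    {u v m : ι} {a b : α} (p : (joinGraph attr).Walk u v) (hpS : ∀ x ∈ p.support, x ∈ S)
    (ha : a ∈ attr u) (hb : b ∈ attr v) (ham : a ∈ attr m) (hbm : b ∈ attr m) :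
    ∃ R ∈ S, a ∈ attr R ∧ b ∈ attr R := by
  obtain ⟨T, hJT⟩ := hγ.1
  induction hn : p.length using Nat.strong_induction_on generalizing u v m a b with
  | _ n ih =>
    obtain ⟨m', hm'um, hm'mv, hm'uv⟩ := hJT.1.2.exists_median u m v
    have ham' := hJT.mem_attr_of_mem_support_path ha ham hm'um
    have hbm' := hJT.mem_attr_of_mem_support_path hbm hb hm'mv
    rcases hJT.1.2.exists_append_cons_of_mem_support_path p hm'uv with
      rfl | ⟨q, q', hqq', p₁, p₂, rfl, hm'qq'⟩
    · exact ⟨m', hpS _ p.start_mem_support, ham', hbm'⟩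
    obtain ⟨c, hc⟩ := hqq'.2
    rw [Finset.mem_inter] at hc
    have hcm' := hJT.mem_attr_of_mem_support_path hc.1 hc.2 hm'qq'
    simp only [Walk.length_append, Walk.length_cons, Walk.support_append, Walk.support_cons,
      List.tail_cons, List.mem_append] at hn hpS
    obtain ⟨R₁, hR₁, haR₁, hcR₁⟩ :=
      ih p₁.length (by omega) p₁ (fun x hx => hpS x (.inl hx)) ha hc.1 ham' hcm' rfl
    obtain ⟨R₂, hR₂, hcR₂, hbR₂⟩ :=
      ih p₂.length (by omega) p₂ (fun x hx => hpS x (.inr hx)) hc.2 hb hcm' hbm' rfl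
    by_cases hbR₁ : b ∈ attr R₁
    · exact ⟨R₁, hR₁, haR₁, hbR₁⟩
    by_cases haR₂ : a ∈ attr R₂
    · exact ⟨R₂, hR₂, haR₂, hbR₂⟩
    rcases hγ.eq_or_eq_of_mem_attr haR₁ hcR₁ hcR₂ hbR₂ ham' hcm' hbm' haR₂ hbR₁ with rfl | rfl
    · exact ⟨m', hR₁, ham', hbm'⟩
    · exact ⟨m', hR₂, ham', hbm'⟩

theorem GammaAcyclic.exists_subset_attr_of_forall_pair (hγ : GammaAcyclic attr)
    {S : Finset ι} (hS : S.Nonempty) {N : ι} {X : Finset α} (hXN : X ⊆ attr N)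
    (hpair : ∀ a ∈ X, ∀ b ∈ X, ∃ R ∈ S, a ∈ attr R ∧ b ∈ attr R) :
    ∃ R ∈ S, X ⊆ attr R := by
  obtain ⟨R, hR, hmax⟩ := S.exists_max_image (fun R => (attr R ∩ X).card) hS
  refine ⟨R, hR, fun x hxX => ?_⟩
  by_contra hxR
  obtain ⟨R₀, hR₀, hxR₀, -⟩ := hpair x hxX x hxX
  obtain ⟨y, hy⟩ : (attr R ∩ X).Nonempty := Finset.card_pos.1 <|
    (Finset.card_pos.2 ⟨x, Finset.mem_inter.2 ⟨hxR₀, hxX⟩⟩).trans_le (hmax R₀ hR₀)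
  rw [Finset.mem_inter] at hy
  obtain ⟨R', hR', hxR', hyR'⟩ := hpair x hxX y hy.2
  obtain ⟨z, hz, hzR'⟩ : ∃ z ∈ attr R ∩ X, z ∉ attr R' := by
    by_contra! hsub
    have hsub' : attr R ∩ X ⊆ attr R' ∩ X :=
      Finset.subset_inter hsub Finset.inter_subset_right
    have heq := Finset.eq_of_subset_of_card_le hsub' (hmax R' hR')
    exact hxR (Finset.mem_inter.1 (heq ▸ Finset.mem_inter.2 ⟨hxR', hxX⟩)).1
  rw [Finset.mem_inter] at hz
  rcases hγ.eq_or_eq_of_mem_attr hxR' hyR' hy.1 hz.1 (hXN hxX) (hXN hy.2) (hXN hz.2) hxR hzR'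
    with h | h
  · exact hzR' (h ▸ hXN hz.2)
  · exact hxR (h ▸ hXN hxX)

theorem GammaAcyclic.exists_attr_inter_attrsOf_subset (hγ : GammaAcyclic attr) {S : Finset ι}
    (hS : ConnectedSubjoin attr S) (N : ι) : ∃ R ∈ S, attr N ∩ attrsOf attr S ⊆ attr R := by
  refine hγ.exists_subset_attr_of_forall_pair hS.1 Finset.inter_subset_left fun a ha b hb => ?_
  simp only [Finset.mem_inter, attrsOf, Finset.mem_biUnion] at ha hb
  obtain ⟨haN, Qa, hQa, haQ⟩ := ha
  obtain ⟨hbN, Qb, hQb, hbQ⟩ := hb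
  obtain ⟨p⟩ := hS.2.preconnected ⟨Qa, hQa⟩ ⟨Qb, hQb⟩
  exact hγ.exists_mem_attr_pair_of_walk _ (fun _ => p.mem_of_mem_support_map_induce)
    haQ hbQ haN hbN

theorem JoinExpr.ConnectedExpr.connectedSubjoin_rels [DecidableEq ι] {θ : JoinExpr ι}
    (hθ : JoinExpr.ConnectedExpr (joinGraph attr) θ) : ConnectedSubjoin attr θ.rels := by
  induction θ with
  | leaf R => exact ⟨Finset.singleton_nonempty R, by
      rw [JoinExpr.rels, Finset.coe_singleton, induce_singleton_eq_top]
      exact connected_top⟩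
  | node l r ihl ihr =>
    obtain ⟨⟨R, hR, S, hS, hadj⟩, hl, hr⟩ := hθ
    refine ⟨(ihl hl).1.mono Finset.subset_union_left, ?_⟩
    rw [JoinExpr.rels, Finset.coe_union]
    exact connected_induce_union (ihl hl).2.preconnected (ihr hr).2.preconnected hR hS hadj

section Safe

variable [Fintype ι]

theorem image_fullOutput_subset_output {D : Type*} (I : Inst attr D) (S : Finset ι) :
    restrict (attrsOf_mono attr (Finset.subset_univ S)) '' fullOutput attr I ⊆
      output attr I S := by
  rintro _ ⟨w, hw, rfl⟩ R -
  exact hw R (Finset.mem_univ R)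

theorem safe_univ : Safe attr (Finset.univ : Finset ι) :=
  fun _ _ _ => (Set.image_id _).symm

theorem Safe.output_eq_image_output {S₁ S₂ : Finset ι} (h₁ : Safe.{v} attr S₁)
    (h₂ : Safe.{v} attr S₂) (hS : S₁ ⊆ S₂) {D : Type v} {I : Inst attr D}
    (hI : FullyReduced attr I) :
    output attr I S₁ = restrict (attrsOf_mono attr hS) '' output attr I S₂ := by
  rw [h₁ D I hI, h₂ D I hI, Set.image_image]
  rfl

variable [DecidableEq ι]

theorem FullyReduced.mem_image_output_insert {D : Type*} {I : Inst attr D}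
    (hI : FullyReduced attr I) {S : Finset ι} {N Rc : ι} (hRc : Rc ∈ S)
    (hN : attr N ∩ attrsOf attr S ⊆ attr Rc) {t : Tuple D (attrsOf attr S)}
    (ht : t ∈ output attr I S) :
    t ∈ restrict (attrsOf_mono attr (Finset.subset_insert N S)) ''
      output attr I (insert N S) := by
  obtain ⟨w, hw, hwt⟩ : restrict (attr_subset_attrsOf attr hRc) t ∈ _ := hI Rc ▸ ht Rc hRc
  let t' : Tuple D (attrsOf attr (insert N S)) := fun a =>
    if h : a.1 ∈ attrsOf attr S then t ⟨a.1, h⟩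
    else w ⟨a.1, attrsOf_mono attr (Finset.subset_univ _) a.2⟩
  refine ⟨t', fun R hR => ?_, funext fun a => dif_pos a.2⟩
  rcases Finset.mem_insert.1 hR with rfl | hRS
  · convert hw R (Finset.mem_univ R) using 1
    funext a
    show t' _ = w _
    dsimp only [t']
    split_ifs with h
    · exact (congrFun hwt ⟨a.1, hN (Finset.mem_inter.2 ⟨a.2, h⟩)⟩).symm
    · rfl
  · convert ht R hRS using 1
    funext a
    exact dif_pos _

theorem Safe.of_insert {S : Finset ι} {N Rc : ι} (hsafe : Safe.{v} attr (insert N S))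
    (hRc : Rc ∈ S) (hN : attr N ∩ attrsOf attr S ⊆ attr Rc) : Safe.{v} attr S := by
  intro D I hI
  refine Set.Subset.antisymm (fun t ht => ?_) (image_fullOutput_subset_output I S)
  obtain ⟨t', ht', rfl⟩ := hI.mem_image_output_insert hRc hN ht
  rw [hsafe D I hI] at ht'
  obtain ⟨w, hw, rfl⟩ := ht'
  exact ⟨w, hw, rfl⟩

theorem GammaAcyclic.safe_of_connectedSubjoin (hγ : GammaAcyclic attr) {S : Finset ι}
    (hS : ConnectedSubjoin attr S) : Safe attr S := by
  refine Finset.strongDownwardInduction (n := Fintype.card ι)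
    (p := fun S => ConnectedSubjoin attr S → Safe attr S) (fun S ih _ hS => ?_) S
    S.card_le_univ hS
  by_cases hU : S = Finset.univ
  · subst hU
    exact safe_univ
  obtain ⟨N₀, hN₀⟩ : ∃ N, N ∉ S := by simpa [Finset.eq_univ_iff_forall] using hU
  obtain ⟨R₀, hR₀⟩ := hS.1
  obtain ⟨p⟩ := hγ.connected_joinGraph.preconnected R₀ N₀
  obtain ⟨d, -, hdS, hdN⟩ := p.exists_boundary_dart S hR₀ hN₀
  have hins : ConnectedSubjoin attr (insert d.snd S) := by
    refine ⟨Finset.insert_nonempty _ _, ?_⟩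
    rw [Finset.coe_insert, Set.insert_eq, Set.union_comm]
    exact connected_induce_union hS.2.preconnected (by simp) hdS rfl d.adj
  obtain ⟨Rc, hRc, hsub⟩ := hγ.exists_attr_inter_attrsOf_subset hS d.snd
  exact (ih (insert d.snd S).card_le_univ (Finset.ssubset_insert hdN) hins).of_insert hRc hsub

theorem JoinExpr.monotoneOn_of_forall_safe
    (hsafe : ∀ S : Finset ι, ConnectedSubjoin attr S → Safe.{v} attr S) {D : Type v}
    {I : Inst attr D} (hI : FullyReduced attr I) {θ : JoinExpr ι}
    (hθ : JoinExpr.ConnectedExpr (joinGraph attr) θ) : JoinExpr.MonotoneOn attr I θ := by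
  induction θ with
  | leaf => trivial
  | node l r ihl ihr =>
    have hsafe_node := hsafe _ hθ.connectedSubjoin_rels
    obtain ⟨-, hl, hr⟩ := hθ
    exact ⟨(hsafe _ hl.connectedSubjoin_rels).output_eq_image_output hsafe_node
        Finset.subset_union_left hI,
      (hsafe _ hr.connectedSubjoin_rels).output_eq_image_output hsafe_node
        Finset.subset_union_right hI,
      ihl hl, ihr hr⟩

end Safe

theorem monotone_of_gammaAcyclic_general {ι α : Type} [Fintype ι] [DecidableEq ι] [DecidableEq α]
    (attr : ι → Finset α)
    (hγ : GammaAcyclic attr) :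
    ∀ θ : JoinExpr ι, θ.Complete → JoinExpr.ConnectedExpr (joinGraph attr) θ →
      ∀ (D : Type v) (I : Inst attr D), FullyReduced attr I →
        JoinExpr.MonotoneOn attr I θ := by
  intro θ _ hθ D I hI
  exact JoinExpr.monotoneOn_of_forall_safe (fun _ => hγ.safe_of_connectedSubjoin) hI hθ

theorem monotone_of_gammaAcyclic {ι α : Type} [Fintype ι] [DecidableEq ι] [DecidableEq α]
    (attr : ι → Finset α) (hattr : ∀ R : ι, (attr R).Nonempty)
    (hconn : (joinGraph attr).Connected)
    (hγ : GammaAcyclic attr) :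
    ∀ θ : JoinExpr ι, θ.Complete → JoinExpr.ConnectedExpr (joinGraph attr) θ →
      ∀ (D : Type v) (I : Inst attr D), FullyReduced attr I →
        JoinExpr.MonotoneOn attr I θ :=
  monotone_of_gammaAcyclic_general attr hγ

end JoinQuery
end
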